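/- Let w = (w₁, w₂, w₃) = (λv₁, v₂, w₃) ∈ ℝ³ with w₃ = −2⟨(x,y),(v₁,v₂)⟩·φ·ψ' + v₃(1 − φ'ψ), where ‖(v₂,v₃)‖ < κ|v₁| (0 < κ < 3, v₁ ≠ 0), ‖(x,y,z)‖ < 3, |φ| ≤ δ, |ψ'| ≤ m_ψ, |1 − φ'ψ| ≤ 3, λ > 20, and 6(1+κ)δ·m_ψ < κ. Then ‖(w₂,w₃)‖/|w₁| < κ. -/

import Mathlib

/-!
The map stretches the first coordinate of a tangent vector by `λ > 20`, while the other two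
coordinates stay below `5 κ |v₁|`: the cone condition gives `|v₂|, |v₃| < κ |v₁|`, so
`|v₃ (1 - φ'ψ)| < 3 κ |v₁|`, and by Cauchy–Schwarz with `‖(x, y)‖ < 3` and
`‖(v₁, v₂)‖ ≤ (1 + κ) |v₁|` the coupling term is at most `6 (1 + κ) δ m_ψ |v₁| < κ |v₁|`.
-/

namespace Real

theorem sqrt_sq_add_sq_le_abs_add_abs (a b : ℝ) : √(a ^ 2 + b ^ 2) ≤ |a| + |b| :=
  (sqrt_le_left (by positivity)).2 <| by
    nlinarith [sq_abs a, sq_abs b, abs_nonneg a, abs_nonneg b]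

theorem abs_mul_add_mul_le_sqrt_mul_sqrt (x y a b : ℝ) :
    |x * a + y * b| ≤ √(x ^ 2 + y ^ 2) * √(a ^ 2 + b ^ 2) := by
  rw [← sqrt_mul (by positivity)]
  exact abs_le_sqrt (by nlinarith [sq_nonneg (x * b - y * a)])

end Real

theorem stmt_16_general (κ lam δ mψ : ℝ) (hlam : 20 < lam)
    (hδmψ : 6 * (1 + κ) * δ * mψ < κ)
    (x y z v₁ v₂ v₃ φv ψ'v c : ℝ)
    (hcone : Real.sqrt (v₂ ^ 2 + v₃ ^ 2) < κ * |v₁|)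
    (hq : Real.sqrt (x ^ 2 + y ^ 2 + z ^ 2) < 3)
    (hφ : |φv| ≤ δ) (hψ' : |ψ'v| ≤ mψ) (hc : |c| ≤ 3)
    (w₁ w₂ w₃ : ℝ) (hw₁ : w₁ = lam * v₁) (hw₂ : w₂ = v₂)
    (hw₃ : w₃ = -2 * (x * v₁ + y * v₂) * φv * ψ'v + v₃ * c) :
    Real.sqrt (w₂ ^ 2 + w₃ ^ 2) / |w₁| < κ := by
  subst w₁ w₂ w₃
  have hκv₁ : 0 < κ * |v₁| := (Real.sqrt_nonneg _).trans_lt hcone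
  have hκ : 0 < κ := pos_of_mul_pos_left hκv₁ (abs_nonneg v₁)
  have hv₁ : 0 < |v₁| := pos_of_mul_pos_right hκv₁ hκ.le
  have hv₂ : |v₂| < κ * |v₁| :=
    (Real.abs_le_sqrt (le_add_of_nonneg_right (sq_nonneg v₃))).trans_lt hcone
  have hv₃ : |v₃| < κ * |v₁| :=
    (Real.abs_le_sqrt (le_add_of_nonneg_left (sq_nonneg v₂))).trans_lt hcone
  have hxy : √(x ^ 2 + y ^ 2) ≤ 3 :=
    (Real.sqrt_le_sqrt (le_add_of_nonneg_right (sq_nonneg z))).trans hq.le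
  have hv : √(v₁ ^ 2 + v₂ ^ 2) ≤ (1 + κ) * |v₁| :=
    (Real.sqrt_sq_add_sq_le_abs_add_abs v₁ v₂).trans (by linarith)
  have hinner : |x * v₁ + y * v₂| ≤ 3 * ((1 + κ) * |v₁|) :=
    (Real.abs_mul_add_mul_le_sqrt_mul_sqrt x y v₁ v₂).trans
      (mul_le_mul hxy hv (Real.sqrt_nonneg _) zero_le_three)
  have hcoupling :
      |-2 * (x * v₁ + y * v₂) * φv * ψ'v| ≤ 2 * (3 * ((1 + κ) * |v₁|)) * δ * mψ := by
    simp only [abs_mul, abs_neg, abs_two]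
    gcongr
    exact mul_nonneg (by positivity) ((abs_nonneg φv).trans hφ)
  have hw₃ : |-2 * (x * v₁ + y * v₂) * φv * ψ'v + v₃ * c| < 4 * (κ * |v₁|) := by
    have hv₃c : |v₃ * c| ≤ κ * |v₁| * 3 := by
      rw [abs_mul]; exact mul_le_mul hv₃.le hc (abs_nonneg c) hκv₁.le
    have hsmall : 6 * (1 + κ) * δ * mψ * |v₁| < κ * |v₁| := mul_lt_mul_of_pos_right hδmψ hv₁
    have := abs_add_le (-2 * (x * v₁ + y * v₂) * φv * ψ'v) (v₃ * c)
    linarith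
  rw [abs_mul, abs_of_pos (by linarith : (0 : ℝ) < lam),
    div_lt_iff₀ (mul_pos (by linarith) hv₁)]
  calc √(v₂ ^ 2 + _ ^ 2) ≤ |v₂| + |_| := Real.sqrt_sq_add_sq_le_abs_add_abs _ _
    _ < 5 * (κ * |v₁|) := by linarith
    _ < κ * (lam * |v₁|) := by nlinarith

theorem stmt_16 (κ lam δ mψ : ℝ) (hκ0 : 0 < κ) (hκ : κ < 3) (hlam : 20 < lam)
    (hδmψ : 6 * (1 + κ) * δ * mψ < κ)
    (x y z v₁ v₂ v₃ φv ψ'v c : ℝ) (hv₁ : v₁ ≠ 0)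
    (hcone : Real.sqrt (v₂ ^ 2 + v₃ ^ 2) < κ * |v₁|)
    (hq : Real.sqrt (x ^ 2 + y ^ 2 + z ^ 2) < 3)
    (hφ : |φv| ≤ δ) (hψ' : |ψ'v| ≤ mψ) (hc : |c| ≤ 3)
    (w₁ w₂ w₃ : ℝ) (hw₁ : w₁ = lam * v₁) (hw₂ : w₂ = v₂)
    (hw₃ : w₃ = -2 * (x * v₁ + y * v₂) * φv * ψ'v + v₃ * c) :
    Real.sqrt (w₂ ^ 2 + w₃ ^ 2) / |w₁| < κ :=
  stmt_16_general κ lam δ mψ hlam hδmψ x y z v₁ v₂ v₃ φv ψ'v c hcone hq hφ hψ' hc w₁ w₂ w₃ hw₁ hw₂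
    hw₃
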